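/- Let F(n) be the n-th Fibonacci number. Then both limits lim_{n→∞} F(2^{2n}) and lim_{n→∞} F(2^{2n+1}) exist in ℤ_2, and each limit L satisfies 5L^2 + 3 = 0 (i.e. L = ±√(-3/5) in ℤ_2). -/

import Mathlib

/-!
With `L` the Lucas numbers, `F (2m) = F m * L m` and, for even `m`, `L (2m) = L m ^ 2 - 2` and
`L m ^ 2 - 5 F m ^ 2 = 4`. Squaring lifts `L (2^k) ≡ -1` from modulus `2^(k+1)` to `2^(k+2)`, so
`F (2^(k+2)) = F (2^k) * L (2^k) * L (2^(k+1)) ≡ F (2^k) [ZMOD 2^(k+1)]`: the subsequences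
along even and odd exponents are 2-adically Cauchy. Moreover
`5 F (2^k) ^ 2 + 3 = (L (2^k) + 1) (L (2^k) - 1)` is divisible by `2^(k+2)`, so every limit
satisfies `5 L ^ 2 + 3 = 0`.
-/

open Filter Topology

instance : Fact (Nat.Prime 2) := ⟨by norm_num⟩

namespace Nat

theorem fib_succ_sq_sub_fib_succ_mul_fib_sub_fib_sq (n : ℕ) :
    (fib (n + 1) : ℤ) ^ 2 - fib (n + 1) * fib n - fib n ^ 2 = (-1) ^ n := by
  induction n with
  | zero => simp
  | succ n ih =>
    rw [fib_add_two, pow_succ]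
    push_cast
    linear_combination (-1 : ℤ) * ih

/-- The Lucas numbers `F (n - 1) + F (n + 1)`, written without subtracting indices. -/
def lucas (n : ℕ) : ℤ := 2 * fib (n + 1) - fib n

theorem lucas_sq_sub_five_mul_fib_sq (n : ℕ) : lucas n ^ 2 - 5 * fib n ^ 2 = 4 * (-1) ^ n := by
  rw [lucas]
  linear_combination 4 * fib_succ_sq_sub_fib_succ_mul_fib_sub_fib_sq n

theorem fib_two_mul_eq_fib_mul_lucas (n : ℕ) : (fib (2 * n) : ℤ) = fib n * lucas n := by
  have h : fib n ≤ 2 * fib (n + 1) := fib_le_fib_succ.trans (by omega)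
  rw [fib_two_mul, lucas, Nat.cast_mul, Nat.cast_sub h]
  push_cast
  ring

theorem lucas_two_mul (n : ℕ) : lucas (2 * n) = lucas n ^ 2 - 2 * (-1) ^ n := by
  rw [lucas, fib_two_mul_eq_fib_mul_lucas, fib_two_mul_add_one, lucas]
  push_cast
  linear_combination (-2 : ℤ) * fib_succ_sq_sub_fib_succ_mul_fib_sub_fib_sq n

theorem lucas_two_pow_succ_modEq (k : ℕ) : lucas (2 ^ (k + 1)) ≡ -1 [ZMOD 2 ^ (k + 2)] := by
  induction k with
  | zero => decide
  | succ k ih =>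
    obtain ⟨u, hu⟩ := Int.modEq_iff_dvd.mp ih.symm
    rw [_root_.pow_succ' 2 (k + 1), lucas_two_mul,
      (Nat.even_pow.mpr ⟨even_two, k.succ_ne_zero⟩).neg_one_pow, Int.modEq_iff_dvd]
    exact ⟨u - 2 ^ (k + 1) * u ^ 2,
      by linear_combination (1 - lucas (2 ^ (k + 1)) - 2 ^ (k + 2) * u) * hu⟩

theorem two_pow_dvd_five_mul_fib_two_pow_sq_add_three (k : ℕ) :
    (2 : ℤ) ^ (k + 2) ∣ 5 * fib (2 ^ k) ^ 2 + 3 := by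
  cases k with
  | zero => decide
  | succ k =>
    have hL := (lucas_two_pow_succ_modEq k).symm.dvd
    have hsq := lucas_sq_sub_five_mul_fib_sq (2 ^ (k + 1))
    rw [(Nat.even_pow.mpr ⟨even_two, k.succ_ne_zero⟩).neg_one_pow] at hsq
    have hfactor : 5 * (fib (2 ^ (k + 1)) : ℤ) ^ 2 + 3
        = (lucas (2 ^ (k + 1)) - -1) * (lucas (2 ^ (k + 1)) - 1) := by
      linear_combination (-1 : ℤ) * hsq
    rw [hfactor, pow_succ]
    refine mul_dvd_mul hL ?_
    have h2 : (2 : ℤ) ∣ lucas (2 ^ (k + 1)) - -1 := (dvd_pow_self 2 (by omega)).trans hL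
    rw [show lucas (2 ^ (k + 1)) - 1 = lucas (2 ^ (k + 1)) - -1 - 2 by ring]
    exact h2.sub dvd_rfl

theorem two_pow_dvd_fib_two_pow_add_two_sub (k : ℕ) :
    (2 : ℤ) ^ (k + 1) ∣ fib (2 ^ (k + 2)) - fib (2 ^ k) := by
  cases k with
  | zero => decide
  | succ k =>
    have hL := lucas_two_pow_succ_modEq k
    have hL' : lucas (2 ^ (k + 2)) ≡ -1 [ZMOD 2 ^ (k + 2)] :=
      (lucas_two_pow_succ_modEq (k + 1)).of_mul_right 2
    have hprod : fib (2 ^ (k + 3)) - fib (2 ^ (k + 1))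
        = (fib (2 ^ (k + 1)) : ℤ) * (lucas (2 ^ (k + 1)) * lucas (2 ^ (k + 2)) - 1) := by
      rw [_root_.pow_succ' 2 (k + 2), fib_two_mul_eq_fib_mul_lucas, _root_.pow_succ' 2 (k + 1),
        fib_two_mul_eq_fib_mul_lucas]
      ring
    rw [hprod]
    exact dvd_mul_of_dvd_right (hL.mul hL').symm.dvd _

end Nat

theorem PadicInt.norm_intCast_le_of_pow_dvd {p : ℕ} [Fact p.Prime] {x : ℤ} {m : ℕ}
    (h : (p : ℤ) ^ m ∣ x) : ‖(x : ℤ_[p])‖ ≤ (p : ℝ)⁻¹ ^ m := by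
  rw [inv_pow, ← zpow_natCast, ← zpow_neg]
  exact PadicInt.norm_int_le_pow_iff_dvd.mpr h

theorem norm_fib_two_pow_add_two_sub_le (k : ℕ) :
    ‖(Nat.fib (2 ^ (k + 2)) : ℤ_[2]) - Nat.fib (2 ^ k)‖ ≤ 2⁻¹ ^ (k + 1) := by
  simpa using PadicInt.norm_intCast_le_of_pow_dvd (p := 2)
    (Nat.two_pow_dvd_fib_two_pow_add_two_sub k)

theorem norm_five_mul_fib_two_pow_sq_add_three_le (k : ℕ) :
    ‖5 * (Nat.fib (2 ^ k) : ℤ_[2]) ^ 2 + 3‖ ≤ 2⁻¹ ^ (k + 2) := by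
  simpa using PadicInt.norm_intCast_le_of_pow_dvd (p := 2)
    (Nat.two_pow_dvd_five_mul_fib_two_pow_sq_add_three k)

theorem cauchySeq_fib_two_pow_two_mul_add (j : ℕ) :
    CauchySeq fun n ↦ (Nat.fib (2 ^ (2 * n + j)) : ℤ_[2]) :=
  cauchySeq_of_le_geometric 2⁻¹ 1 (by norm_num) fun n ↦ by
    rw [dist_comm, dist_eq_norm, one_mul, show 2 * (n + 1) + j = 2 * n + j + 2 by ring]
    exact (norm_fib_two_pow_add_two_sub_le _).trans
      (pow_le_pow_of_le_one (by norm_num) (by norm_num) (by omega))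

theorem tendsto_five_mul_fib_two_pow_two_mul_add_sq_add_three (j : ℕ) :
    Tendsto (fun n ↦ 5 * (Nat.fib (2 ^ (2 * n + j)) : ℤ_[2]) ^ 2 + 3) atTop (𝓝 0) :=
  squeeze_zero_norm
    (fun n ↦ (norm_five_mul_fib_two_pow_sq_add_three_le _).trans
      (pow_le_pow_of_le_one (by norm_num) (by norm_num) (by omega)))
    (tendsto_pow_atTop_nhds_zero_of_lt_one (by norm_num) (by norm_num))

theorem exists_tendsto_fib_two_pow_two_mul_add (j : ℕ) :
    ∃ L : ℤ_[2], Tendsto (fun n ↦ (Nat.fib (2 ^ (2 * n + j)) : ℤ_[2])) atTop (𝓝 L) ∧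
      5 * L ^ 2 + 3 = 0 := by
  obtain ⟨L, hL⟩ := cauchySeq_tendsto_of_complete (cauchySeq_fib_two_pow_two_mul_add j)
  exact ⟨L, hL, tendsto_nhds_unique (((hL.pow 2).const_mul 5).add_const 3)
    (tendsto_five_mul_fib_two_pow_two_mul_add_sq_add_three j)⟩

/-- Both limits `lim F(2^(2n))` and `lim F(2^(2n+1))` exist in `ℤ_2`, and each limit `L`
satisfies `5L² + 3 = 0`. -/
theorem stmt_12 :
    ∃ L₁ L₂ : ℤ_[2],
      Tendsto (fun n : ℕ => ((Nat.fib (2 ^ (2 * n)) : ℕ) : ℤ_[2])) atTop (𝓝 L₁) ∧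
      Tendsto (fun n : ℕ => ((Nat.fib (2 ^ (2 * n + 1)) : ℕ) : ℤ_[2])) atTop (𝓝 L₂) ∧
      5 * L₁ ^ 2 + 3 = 0 ∧ 5 * L₂ ^ 2 + 3 = 0 := by
  obtain ⟨L₁, h₁, hL₁⟩ := exists_tendsto_fib_two_pow_two_mul_add 0
  obtain ⟨L₂, h₂, hL₂⟩ := exists_tendsto_fib_two_pow_two_mul_add 1
  exact ⟨L₁, L₂, by simpa using h₁, h₂, hL₁, hL₂⟩
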